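/- For every ξ>0 and β>0, the coordinate functions of the Cramér–von-Mises minimum distance estimator's influence function, φ̃_ξ(v) = (19+5ξ)/(36(3+ξ)(2+ξ)) + (1/ξ)·v²·log v + ((2−ξ)/(4ξ²))·v² − v^{2+ξ}/(ξ²(2+ξ)) and φ̃_β(v) = (5+ξ)/(6(3+ξ)(2+ξ)β) − v²/(2ξβ) + v^{2+ξ}/(ξβ(2+ξ)), are bounded on (0,1]: sup_{v∈(0,1]} |φ̃_ξ(v)| < ∞ and sup_{v∈(0,1]} |φ̃_β(v)| < ∞. Consequently the influence function of the CvM-MDE, which equals a fixed invertible matrix times (φ̃_ξ, φ̃_β)ᵀ evaluated at v = (1+ξx/β)^{−1/ξ}, is bounded, so the CvM-MDE has finite maximal asymptotic bias. -/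
import Mathlib


open Real Set Matrix

/-- Shape coordinate of the CvM-MDE influence function in the v-coordinate. -/
noncomputable def phiXi (ξ v : ℝ) : ℝ :=
  (19 + 5 * ξ) / (36 * (3 + ξ) * (2 + ξ)) + (1 / ξ) * v ^ 2 * Real.log v
    + (2 - ξ) / (4 * ξ ^ 2) * v ^ 2 - v ^ (2 + ξ) / (ξ ^ 2 * (2 + ξ))

/-- Scale coordinate of the CvM-MDE influence function in the v-coordinate. -/
noncomputable def phiBeta (ξ β v : ℝ) : ℝ :=
  (5 + ξ) / (6 * (3 + ξ) * (2 + ξ) * β) - v ^ 2 / (2 * ξ * β)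
    + v ^ (2 + ξ) / (ξ * β * (2 + ξ))

lemma sq_log_bound {v : ℝ} (h0 : 0 < v) (h1 : v ≤ 1) : |v ^ 2 * Real.log v| ≤ 1 := by
  have hlog : Real.log v ≤ 0 := Real.log_nonpos h0.le h1
  have h2 : Real.log (1 / v) ≤ 1 / v - 1 := Real.log_le_sub_one_of_pos (by positivity)
  rw [Real.log_div one_ne_zero (ne_of_gt h0), Real.log_one] at h2
  rw [abs_mul, abs_of_nonneg (by positivity : (0:ℝ) ≤ v ^ 2), abs_of_nonpos hlog]
  have hv2 : v ^ 2 * (1 / v) = v := by field_simp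
  have h3 : v ^ 2 * (-Real.log v) ≤ v ^ 2 * (1 / v) :=
    mul_le_mul_of_nonneg_left (by linarith) (by positivity)
  nlinarith

lemma abs4 (c0 c1 c2 c3 L V R : ℝ) (hL : |L| ≤ 1) (hV : |V| ≤ 1) (hR : |R| ≤ 1) :
    |c0 + c1 * L + c2 * V - c3 * R| ≤ |c0| + |c1| + |c2| + |c3| := by
  have t1 : |c1 * L| ≤ |c1| := by
    rw [abs_mul]; nlinarith [abs_nonneg c1, abs_nonneg L]
  have t2 : |c2 * V| ≤ |c2| := by
    rw [abs_mul]; nlinarith [abs_nonneg c2, abs_nonneg V]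
  have t3 : |c3 * R| ≤ |c3| := by
    rw [abs_mul]; nlinarith [abs_nonneg c3, abs_nonneg R]
  calc |c0 + c1 * L + c2 * V - c3 * R|
      ≤ |c0 + c1 * L + c2 * V| + |c3 * R| := abs_sub _ _
    _ ≤ |c0 + c1 * L| + |c2 * V| + |c3 * R| := by linarith [abs_add_le (c0 + c1 * L) (c2 * V)]
    _ ≤ |c0| + |c1 * L| + |c2 * V| + |c3 * R| := by linarith [abs_add_le c0 (c1 * L)]
    _ ≤ |c0| + |c1| + |c2| + |c3| := by linarith

lemma phiXi_bound (ξ : ℝ) (hξ : 0 < ξ) :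
    ∀ v ∈ Ioc (0 : ℝ) 1, |phiXi ξ v| ≤
      |(19 + 5 * ξ) / (36 * (3 + ξ) * (2 + ξ))| + |1 / ξ| + |(2 - ξ) / (4 * ξ ^ 2)|
        + |1 / (ξ ^ 2 * (2 + ξ))| := by
  rintro v ⟨h0, h1⟩
  have hL := sq_log_bound h0 h1
  have hV : |v ^ 2| ≤ 1 := by
    rw [abs_of_nonneg (by positivity : (0:ℝ) ≤ v ^ 2)]; nlinarith
  have hR : |v ^ (2 + ξ)| ≤ 1 := by
    rw [abs_of_nonneg (Real.rpow_nonneg h0.le _)]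
    exact Real.rpow_le_one h0.le h1 (by linarith)
  have he : phiXi ξ v = (19 + 5 * ξ) / (36 * (3 + ξ) * (2 + ξ))
      + (1 / ξ) * (v ^ 2 * Real.log v) + ((2 - ξ) / (4 * ξ ^ 2)) * v ^ 2
      - (1 / (ξ ^ 2 * (2 + ξ))) * v ^ (2 + ξ) := by
    unfold phiXi; ring
  rw [he]
  exact abs4 _ _ _ _ _ _ _ hL hV hR

lemma phiBeta_bound (ξ β : ℝ) (hξ : 0 < ξ) (hβ : 0 < β) :
    ∀ v ∈ Ioc (0 : ℝ) 1, |phiBeta ξ β v| ≤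
      |(5 + ξ) / (6 * (3 + ξ) * (2 + ξ) * β)| + |0| + |(-1) / (2 * ξ * β)|
        + |(-1) / (ξ * β * (2 + ξ))| := by
  rintro v ⟨h0, h1⟩
  have hV : |v ^ 2| ≤ 1 := by
    rw [abs_of_nonneg (by positivity : (0:ℝ) ≤ v ^ 2)]; nlinarith
  have hR : |v ^ (2 + ξ)| ≤ 1 := by
    rw [abs_of_nonneg (Real.rpow_nonneg h0.le _)]
    exact Real.rpow_le_one h0.le h1 (by linarith)
  have he : phiBeta ξ β v = (5 + ξ) / (6 * (3 + ξ) * (2 + ξ) * β)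
      + 0 * (v ^ 2 * Real.log v) + ((-1) / (2 * ξ * β)) * v ^ 2
      - ((-1) / (ξ * β * (2 + ξ))) * v ^ (2 + ξ) := by
    unfold phiBeta; ring
  rw [he]
  exact abs4 _ _ _ _ _ _ _ (sq_log_bound h0 h1) hV hR

set_option maxHeartbeats 1000000 in
/-- The coordinate functions of the CvM-MDE influence function are bounded on (0,1];
consequently the influence function itself (a fixed invertible matrix applied to
(φ̃_ξ, φ̃_β)ᵀ at v = (1+ξx/β)^{−1/ξ}) is bounded in Euclidean norm, so the CvM minimum
distance estimator has finite maximal asymptotic bias. -/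
theorem cvm_mde_if_bounded (ξ β : ℝ) (hξ : 0 < ξ) (hβ : 0 < β) :
    (∃ C : ℝ, ∀ v ∈ Ioc (0 : ℝ) 1, |phiXi ξ v| ≤ C) ∧
    (∃ C : ℝ, ∀ v ∈ Ioc (0 : ℝ) 1, |phiBeta ξ β v| ≤ C) ∧
    (∀ J : Matrix (Fin 2) (Fin 2) ℝ, IsUnit J.det →
      ∃ C : ℝ, ∀ x : ℝ, 0 ≤ x →
        Real.sqrt
          (((J *ᵥ ![phiXi ξ ((1 + ξ * x / β) ^ (-1 / ξ)),
              phiBeta ξ β ((1 + ξ * x / β) ^ (-1 / ξ))]) 0) ^ 2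
            + ((J *ᵥ ![phiXi ξ ((1 + ξ * x / β) ^ (-1 / ξ)),
              phiBeta ξ β ((1 + ξ * x / β) ^ (-1 / ξ))]) 1) ^ 2) ≤ C) := by
  set C1 : ℝ := |(19 + 5 * ξ) / (36 * (3 + ξ) * (2 + ξ))| + |1 / ξ| + |(2 - ξ) / (4 * ξ ^ 2)|
        + |1 / (ξ ^ 2 * (2 + ξ))| with hC1def
  set C2 : ℝ := |(5 + ξ) / (6 * (3 + ξ) * (2 + ξ) * β)| + |(0:ℝ)| + |(-1) / (2 * ξ * β)|
        + |(-1) / (ξ * β * (2 + ξ))| with hC2def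
  have hC1 := phiXi_bound ξ hξ
  have hC2 := phiBeta_bound ξ β hξ hβ
  refine ⟨⟨C1, hC1⟩, ⟨C2, hC2⟩, ?_⟩
  intro J _
  set M : ℝ := max C1 C2 with hMdef
  refine ⟨(|J 0 0| + |J 0 1| + |J 1 0| + |J 1 1|) * M, ?_⟩
  intro x hx
  set v : ℝ := (1 + ξ * x / β) ^ (-1 / ξ) with hvdef
  have hfrac : 0 ≤ ξ * x / β := div_nonneg (mul_nonneg hξ.le hx) hβ.le
  have hbase : (0:ℝ) < 1 + ξ * x / β := by linarith
  have hvmem : v ∈ Ioc (0 : ℝ) 1 := by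
    constructor
    · exact Real.rpow_pos_of_pos hbase _
    · exact Real.rpow_le_one_of_one_le_of_nonpos (by linarith)
        (le_of_lt (div_neg_of_neg_of_pos (by norm_num) hξ))
  have hφ1 : |phiXi ξ v| ≤ C1 := hC1 v hvmem
  have hφ2 : |phiBeta ξ β v| ≤ C2 := hC2 v hvmem
  have hM1 : C1 ≤ M := le_max_left _ _
  have hM2 : C2 ≤ M := le_max_right _ _
  have hM0 : 0 ≤ M := le_trans (abs_nonneg _) (le_trans hφ1 hM1)
  have ha : (J *ᵥ ![phiXi ξ v, phiBeta ξ β v]) 0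
      = J 0 0 * phiXi ξ v + J 0 1 * phiBeta ξ β v := by
    simp [Matrix.mulVec, dotProduct, Fin.sum_univ_two]
  have hb : (J *ᵥ ![phiXi ξ v, phiBeta ξ β v]) 1
      = J 1 0 * phiXi ξ v + J 1 1 * phiBeta ξ β v := by
    simp [Matrix.mulVec, dotProduct, Fin.sum_univ_two]
  have hba : |(J *ᵥ ![phiXi ξ v, phiBeta ξ β v]) 0| ≤ (|J 0 0| + |J 0 1|) * M := by
    rw [ha]
    have h := abs_add_le (J 0 0 * phiXi ξ v) (J 0 1 * phiBeta ξ β v)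
    rw [abs_mul, abs_mul] at h
    nlinarith [abs_nonneg (J 0 0), abs_nonneg (J 0 1), abs_nonneg (phiXi ξ v),
      abs_nonneg (phiBeta ξ β v)]
  have hbb : |(J *ᵥ ![phiXi ξ v, phiBeta ξ β v]) 1| ≤ (|J 1 0| + |J 1 1|) * M := by
    rw [hb]
    have h := abs_add_le (J 1 0 * phiXi ξ v) (J 1 1 * phiBeta ξ β v)
    rw [abs_mul, abs_mul] at h
    nlinarith [abs_nonneg (J 1 0), abs_nonneg (J 1 1), abs_nonneg (phiXi ξ v),
      abs_nonneg (phiBeta ξ β v)]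
  set a : ℝ := (J *ᵥ ![phiXi ξ v, phiBeta ξ β v]) 0
  set b : ℝ := (J *ᵥ ![phiXi ξ v, phiBeta ξ β v]) 1
  have hsq : a ^ 2 + b ^ 2 ≤ (|a| + |b|) ^ 2 := by
    nlinarith [sq_abs a, sq_abs b, mul_nonneg (abs_nonneg a) (abs_nonneg b)]
  calc Real.sqrt (a ^ 2 + b ^ 2) ≤ Real.sqrt ((|a| + |b|) ^ 2) := Real.sqrt_le_sqrt hsq
    _ = |a| + |b| := Real.sqrt_sq (by positivity)
    _ ≤ (|J 0 0| + |J 0 1| + |J 1 0| + |J 1 1|) * M := by nlinarith
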